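/- arXiv:1205.7081 — 2 statements merged into one kernel-verified Lean document; each statement's English description precedes it below -/
import Mathlib

section
/- If a measure-preserving transformation T is partially mixing with constant α ∈ (0,1] and also partially rigid with constant ρ ∈ (0,1] (i.e., limsup_i μ(A ∩ T^i A) ≥ ρ μ(A) for all measurable A), then α + ρ ≤ 1 + α·μ(A) for every measurable set A with μ(A) > 0; in particular, taking sets of small measure, α + ρ ≤ 1. -/
open MeasureTheory Filter Topology

/-- If `T` is partially mixing with constant `α` and partially rigid with
constant `ρ`, then `α + ρ ≤ 1 + α·μ(A)` for every measurable `A` of positive measure;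
in particular (using the existence of sets of arbitrarily small positive measure),
`α + ρ ≤ 1`. -/
theorem partialMixing_add_partialRigid_le_one
    {X : Type*} [MeasurableSpace X] (μ : Measure X) [IsProbabilityMeasure μ]
    (T : X → X) (hT : MeasurePreserving T μ μ)
    (α ρ : ℝ) (hα : α ∈ Set.Ioc (0:ℝ) 1) (hρ : ρ ∈ Set.Ioc (0:ℝ) 1)
    (hmix : ∀ A B : Set X, MeasurableSet A → MeasurableSet B →
      α * (μ A).toReal * (μ B).toReal ≤
        atTop.liminf (fun i : ℕ => (μ (A ∩ T^[i] ⁻¹' B)).toReal))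
    (hrig : ∀ A : Set X, MeasurableSet A →
      ρ * (μ A).toReal ≤ atTop.limsup (fun i : ℕ => (μ (A ∩ T^[i] ⁻¹' A)).toReal))
    (hsmall : ∀ ε : ℝ, 0 < ε → ∃ A : Set X, MeasurableSet A ∧
      0 < (μ A).toReal ∧ (μ A).toReal < ε) :
    (∀ A : Set X, MeasurableSet A → 0 < μ A →
      α + ρ ≤ 1 + α * (μ A).toReal) ∧ α + ρ ≤ 1 := by
  have main : ∀ A : Set X, MeasurableSet A → 0 < μ A →
      α + ρ ≤ 1 + α * (μ A).toReal := by
    intro A hA hApos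
    set c : ℝ := (μ A).toReal with hc
    have hAfin : μ A ≠ ⊤ := measure_ne_top μ A
    have hcpos : 0 < c := ENNReal.toReal_pos hApos.ne' hAfin
    set g : ℕ → ℝ := fun i => (μ (A ∩ T^[i] ⁻¹' Aᶜ)).toReal with hg
    set f : ℕ → ℝ := fun i => (μ (A ∩ T^[i] ⁻¹' A)).toReal with hf
    -- f i + g i = c
    have hfg : ∀ i, f i = c - g i := by
      intro i
      have hmeas : MeasurableSet (T^[i] ⁻¹' A) :=
        (hT.iterate i).measurable hA
      have h1 : μ (A ∩ T^[i] ⁻¹' A) + μ (A ∩ T^[i] ⁻¹' Aᶜ) = μ A := by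
        have : A ∩ T^[i] ⁻¹' Aᶜ = A \ T^[i] ⁻¹' A := by
          ext x; simp [Set.mem_diff]
        rw [this, measure_inter_add_diff A hmeas]
      have h2 : (μ (A ∩ T^[i] ⁻¹' A)).toReal + (μ (A ∩ T^[i] ⁻¹' Aᶜ)).toReal = c := by
        rw [← ENNReal.toReal_add (measure_ne_top μ _) (measure_ne_top μ _), h1]
      simp only [f, g]
      linarith [h2]
    -- bounds for g
    have hg0 : ∀ i, 0 ≤ g i := fun i => ENNReal.toReal_nonneg
    have hg1 : ∀ i, g i ≤ 1 := by
      intro i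
      have := prob_le_one (μ := μ) (s := A ∩ T^[i] ⁻¹' Aᶜ)
      simpa [g] using ENNReal.toReal_le_of_le_ofReal zero_le_one (by simpa using this)
    have hbdd : atTop.IsBoundedUnder (· ≥ ·) g := isBoundedUnder_of ⟨0, fun i => hg0 i⟩
    have hcobdd : atTop.IsCoboundedUnder (· ≥ ·) g :=
      (isBoundedUnder_of ⟨1, fun i => hg1 i⟩ : atTop.IsBoundedUnder (· ≤ ·) g).isCoboundedUnder_ge
    -- limsup f = c - liminf g
    have hlim : atTop.limsup f = c - atTop.liminf g := by
      have := limsup_const_sub atTop g c hcobdd hbdd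
      calc atTop.limsup f = atTop.limsup (fun i => c - g i) := by
            congr 1; ext i; exact hfg i
        _ = c - atTop.liminf g := this
    have hrigA := hrig A hA
    have hmixA := hmix A Aᶜ hA hA.compl
    have hcompl : (μ Aᶜ).toReal = 1 - c := by
      rw [measure_compl hA hAfin, measure_univ]
      rw [ENNReal.toReal_sub_of_le (prob_le_one) (by simp)]
      simp [c]
    rw [hcompl] at hmixA
    -- ρ * c ≤ limsup f = c - liminf g ≤ c - α c (1-c)
    have key : ρ * c ≤ c - α * c * (1 - c) := by
      calc ρ * c ≤ atTop.limsup f := hrigA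
        _ = c - atTop.liminf g := hlim
        _ ≤ c - α * c * (1 - c) := by linarith [hmixA]
    have : ρ ≤ 1 - α * (1 - c) := by
      nlinarith [hcpos]
    linarith
  refine ⟨main, ?_⟩
  by_contra h
  push_neg at h
  obtain ⟨A, hA, hApos, hAlt⟩ := hsmall ((α + ρ - 1) / α) (div_pos (by linarith) hα.1)
  have hApos' : 0 < μ A := by
    by_contra h'
    push_neg at h'
    simp [le_antisymm h' zero_le] at hApos
  have := main A hA hApos'
  have hα0 := hα.1
  have : α * (μ A).toReal < α * ((α + ρ - 1) / α) := by
    exact mul_lt_mul_of_pos_left hAlt hα0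
  rw [mul_div_cancel₀ _ hα0.ne'] at this
  linarith
end

section
/- Let T = ⊗_{i=1}^∞ S_i be a countable infinite direct product of measure-preserving transformations on a product probability space such that every finite subproduct ⊗_{i=1}^N S_i is partially mixing (with some positive constant). Then T is mildly mixing: T has no nonconstant rigid functions. Specifically, if f ∈ L²(∏ X_i) satisfies ‖U_T^{n_k} f − f‖ → 0 along some n_k → ∞, then f is constant a.e. -/
set_option linter.unusedSectionVars false
set_option maxHeartbeats 1000000

open MeasureTheory Filter Topology

namespace InfProdMix

variable {X : ℕ → Type*} [∀ n, MeasurableSpace (X n)]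

/-- Restriction to the first `N` coordinates. -/
def res (N : ℕ) (x : ∀ n, X n) : ∀ i : Fin N, X i := fun i => x i

lemma measurable_res (N : ℕ) : Measurable (res (X := X) N) :=
  measurable_pi_iff.2 fun _ => measurable_pi_apply _

/-- Combine first `N` coordinates of `w` with the tail of `y`. -/
def comb (N : ℕ) (w : ∀ i : Fin N, X i) (y : ∀ n, X n) : ∀ n, X n :=
  fun n => if h : n < N then w ⟨n, h⟩ else y n

lemma measurable_comb (N : ℕ) :
    Measurable (fun p : (∀ i : Fin N, X i) × (∀ n, X n) => comb N p.1 p.2) := by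
  refine measurable_pi_iff.2 fun n => ?_
  by_cases h : n < N
  · simp only [comb, dif_pos h]
    exact (measurable_pi_apply _).comp measurable_fst
  · simp only [comb, dif_neg h]
    exact (measurable_pi_apply _).comp measurable_snd

lemma res_comb (N : ℕ) (w : ∀ i : Fin N, X i) (y : ∀ n, X n) :
    res N (comb N w y) = w := by
  funext i
  simp [res, comb, i.isLt]

def boxes (X : ℕ → Type*) [∀ n, MeasurableSpace (X n)] : Set (Set (∀ n, X n)) :=
  {B | ∃ (I : Finset ℕ) (s : ∀ i, Set (X i)),
    (∀ i ∈ I, MeasurableSet (s i)) ∧ B = Set.pi ↑I s}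

lemma isPiSystem_boxes : IsPiSystem (boxes X) := by
  classical
  rintro B1 ⟨I₁, s₁, hs₁, rfl⟩ B2 ⟨I₂, s₂, hs₂, rfl⟩ -
  refine ⟨I₁ ∪ I₂, fun i =>
    (if i ∈ I₁ then s₁ i else Set.univ) ∩ (if i ∈ I₂ then s₂ i else Set.univ), ?_, ?_⟩
  · intro i _
    refine MeasurableSet.inter ?_ ?_
    · split
      · next h => exact hs₁ i h
      · exact MeasurableSet.univ
    · split
      · next h => exact hs₂ i h
      · exact MeasurableSet.univ
  · ext x
    simp only [Set.mem_inter_iff, Set.mem_pi, Finset.coe_union, Set.mem_union, Finset.mem_coe]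
    constructor
    · rintro ⟨h1, h2⟩ i hi
      constructor
      · split
        · next h => exact h1 i h
        · trivial
      · split
        · next h => exact h2 i h
        · trivial
    · intro h
      constructor
      · intro i hi
        have := (h i (Or.inl hi)).1
        simpa [hi] using this
      · intro i hi
        have := (h i (Or.inr hi)).2
        simpa [hi] using this

lemma generateFrom_boxes :
    MeasurableSpace.generateFrom (boxes X) = MeasurableSpace.pi := by
  classical
  refine le_antisymm ?_ ?_
  · rw [MeasurableSpace.generateFrom_le_iff]
    rintro B ⟨I, s, hs, rfl⟩
    exact MeasurableSet.pi I.countable_toSet fun i hi => hs i hi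
  · have hpi : (MeasurableSpace.pi : MeasurableSpace (∀ n, X n)) =
        ⨆ i, MeasurableSpace.comap (fun x : ∀ n, X n => x i) inferInstance := rfl
    rw [hpi]
    refine iSup_le fun i => ?_
    rintro t ⟨u, hu, rfl⟩
    refine MeasurableSpace.measurableSet_generateFrom
      ⟨{i}, Function.update (fun j => (Set.univ : Set (X j))) i u, ?_, ?_⟩
    · intro j hj
      rcases Finset.mem_singleton.1 hj with rfl
      simpa using hu
    · ext x
      simp [Set.mem_pi]


variable {μs : ∀ n, Measure (X n)} [∀ n, IsProbabilityMeasure (μs n)]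
  {μ : Measure (∀ n, X n)} [IsProbabilityMeasure μ]

lemma map_coordwise
    (hprod : ∀ (I : Finset ℕ) (s : ∀ i, Set (X i)), (∀ i ∈ I, MeasurableSet (s i)) →
      μ (Set.pi ↑I s) = ∏ i ∈ I, μs i (s i))
    (R : ∀ n, X n → X n) (hR : ∀ n, MeasurePreserving (R n) (μs n) (μs n)) :
    MeasurePreserving (fun x n => R n (x n)) μ μ := by
  have hm : Measurable fun (x : ∀ n, X n) n => R n (x n) :=
    measurable_pi_iff.2 fun n => (hR n).measurable.comp (measurable_pi_apply n)
  refine ⟨hm, ?_⟩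
  haveI : IsProbabilityMeasure (Measure.map (fun (x : ∀ n, X n) n => R n (x n)) μ) :=
    Measure.isProbabilityMeasure_map hm.aemeasurable
  refine ext_of_generate_finite (boxes X) generateFrom_boxes.symm isPiSystem_boxes ?_ ?_
  · rintro B ⟨I, s, hs, rfl⟩
    rw [Measure.map_apply hm (MeasurableSet.pi I.countable_toSet fun i hi => hs i hi)]
    have hpre : (fun (x : ∀ n, X n) n => R n (x n)) ⁻¹' Set.pi ↑I s
        = Set.pi ↑I fun i => R i ⁻¹' s i := by
      ext x; simp [Set.mem_pi]
    rw [hpre, hprod _ _ fun i hi => (hR i).measurable (hs i hi), hprod _ _ hs]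
    exact Finset.prod_congr rfl fun i hi => (hR i).measure_preimage (hs i hi).nullMeasurableSet
  · simp [measure_univ]

lemma map_comb
    (hprod : ∀ (I : Finset ℕ) (s : ∀ i, Set (X i)), (∀ i ∈ I, MeasurableSet (s i)) →
      μ (Set.pi ↑I s) = ∏ i ∈ I, μs i (s i))
    (N : ℕ) :
    MeasurePreserving (fun p : (∀ n, X n) × (∀ n, X n) => comb N (res N p.1) p.2)
      (μ.prod μ) μ := by
  classical
  have hm : Measurable fun p : (∀ n, X n) × (∀ n, X n) => comb N (res N p.1) p.2 :=
    (measurable_comb N).comp (((measurable_res N).comp measurable_fst).prodMk measurable_snd)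
  refine ⟨hm, ?_⟩
  haveI : IsProbabilityMeasure
      (Measure.map (fun p : (∀ n, X n) × (∀ n, X n) => comb N (res N p.1) p.2) (μ.prod μ)) :=
    Measure.isProbabilityMeasure_map hm.aemeasurable
  refine ext_of_generate_finite (boxes X) generateFrom_boxes.symm isPiSystem_boxes ?_ ?_
  · rintro B ⟨I, s, hs, rfl⟩
    rw [Measure.map_apply hm (MeasurableSet.pi I.countable_toSet fun i hi => hs i hi)]
    have hpre : (fun p : (∀ n, X n) × (∀ n, X n) => comb N (res N p.1) p.2) ⁻¹' Set.pi ↑I s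
        = (Set.pi ↑(I.filter fun i => i < N) s) ×ˢ (Set.pi ↑(I.filter fun i => ¬ i < N) s) := by
      ext p
      simp only [Set.mem_preimage, Set.mem_pi, Set.mem_prod, Finset.coe_filter,
        Set.mem_setOf_eq, Finset.mem_coe]
      constructor
      · intro h
        refine ⟨fun i hi => ?_, fun i hi => ?_⟩
        · have := h i hi.1
          simpa [comb, res, hi.2] using this
        · have := h i hi.1
          simpa [comb, res, hi.2] using this
      · rintro ⟨h1, h2⟩ i hi
        by_cases hiN : i < N
        · simpa [comb, res, hiN] using h1 i ⟨hi, hiN⟩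
        · simpa [comb, res, hiN] using h2 i ⟨hi, hiN⟩
    rw [hpre, Measure.prod_prod, hprod _ _ (fun i hi => hs i (Finset.mem_filter.1 hi).1),
      hprod _ _ (fun i hi => hs i (Finset.mem_filter.1 hi).1), hprod _ _ hs]
    exact Finset.prod_filter_mul_prod_filter_not I _ _
  · simp [measure_univ]


lemma eq_const_of_levels {α : Type*} [MeasurableSpace α] {μ : Measure α}
    [IsProbabilityMeasure μ] {g : α → ℝ} (hg : Measurable g)
    (hlev : ∀ a : ℝ, μ {x | g x < a} = 0 ∨ μ {x | g x < a} = 1) :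
    ∃ c : ℝ, g =ᵐ[μ] fun _ => c := by
  classical
  set L : Set ℝ := {a : ℝ | μ {x | g x < a} = 0} with hL
  -- L is nonempty
  have hne : L.Nonempty := by
    by_contra hcon
    have hall : ∀ m : ℕ, μ {x | g x < -(m : ℝ)} = 1 := by
      intro m
      rcases hlev (-(m : ℝ)) with h | h
      · exact absurd (⟨-(m : ℝ), h⟩ : L.Nonempty) hcon
      · exact h
    have hint : (⋂ m : ℕ, {x | g x < -(m : ℝ)}) = ∅ := by
      ext x
      simp only [Set.mem_iInter, Set.mem_setOf_eq, Set.mem_empty_iff_false, iff_false, not_forall]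
      obtain ⟨m, hm⟩ := exists_nat_gt (-g x)
      exact ⟨m, by push_neg; linarith⟩
    have hcompl : μ (⋂ m : ℕ, {x | g x < -(m : ℝ)})ᶜ = 0 := by
      rw [Set.compl_iInter]
      refine measure_iUnion_null fun m => ?_
      rw [measure_compl (measurableSet_lt hg measurable_const) (measure_ne_top μ _), hall m]
      simp
    have h1 : (1 : ENNReal) ≤ μ (⋂ m : ℕ, {x | g x < -(m : ℝ)}) := by
      have := measure_univ (μ := μ)
      calc (1 : ENNReal) = μ Set.univ := this.symm
        _ ≤ μ (⋂ m : ℕ, {x | g x < -(m : ℝ)}) + μ (⋂ m : ℕ, {x | g x < -(m : ℝ)})ᶜ := by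
            rw [← Set.union_compl_self (⋂ m : ℕ, {x | g x < -(m : ℝ)})]
            exact measure_union_le _ _
        _ = μ (⋂ m : ℕ, {x | g x < -(m : ℝ)}) := by rw [hcompl, add_zero]
    rw [hint] at h1
    simp at h1
  -- L is bounded above
  have hex : ∃ m : ℕ, μ {x | g x < (m : ℝ)} = 1 := by
    by_contra hcon
    push_neg at hcon
    have hall : ∀ m : ℕ, μ {x | g x < (m : ℝ)} = 0 := fun m =>
      (hlev (m : ℝ)).resolve_right (hcon m)
    have huniv : (⋃ m : ℕ, {x | g x < (m : ℝ)}) = Set.univ := by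
      ext x
      simp only [Set.mem_iUnion, Set.mem_setOf_eq, Set.mem_univ, iff_true]
      exact exists_nat_gt (g x)
    have : μ (⋃ m : ℕ, {x | g x < (m : ℝ)}) = 0 := measure_iUnion_null hall
    rw [huniv, measure_univ] at this
    simp at this
  obtain ⟨m₀, hm₀⟩ := hex
  have hbdd : BddAbove L := by
    refine ⟨(m₀ : ℝ), fun a ha => ?_⟩
    by_contra hcon
    push_neg at hcon
    have hsub : {x | g x < (m₀ : ℝ)} ⊆ {x | g x < a} := fun x hx => lt_trans hx hcon
    have := measure_mono (μ := μ) hsub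
    rw [hm₀, ha] at this
    simp at this
  set c : ℝ := sSup L with hc
  have h1 : μ {x | g x < c} = 0 := by
    have hsub : {x | g x < c} ⊆ ⋃ m : ℕ, {x | g x < c - 1 / (m + 1)} := by
      intro x hx
      obtain ⟨m, hm⟩ := exists_nat_one_div_lt (show (0:ℝ) < c - g x by have := hx; simp only [Set.mem_setOf_eq] at this; linarith)
      exact Set.mem_iUnion.2 ⟨m, by simp only [Set.mem_setOf_eq]; linarith⟩
    refine measure_mono_null hsub (measure_iUnion_null fun m => ?_)
    by_cases hcm : c - 1 / (m + 1) ≤ sSup L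
    ·
      rcases lt_or_eq_of_le hcm with hlt | heq
      · obtain ⟨a', ha'L, ha'⟩ := exists_lt_of_lt_csSup hne hlt
        exact measure_mono_null (fun x hx => lt_trans hx ha') ha'L
      · -- c - 1/(m+1) = sSup L; but 1/(m+1) > 0 so c - 1/(m+1) < c = sSup L, contradiction
        exfalso
        have : (0:ℝ) < 1 / (m + 1) := by positivity
        rw [← hc] at heq
        linarith
    · exfalso
      apply hcm
      rw [← hc]
      have : (0:ℝ) < 1 / (m + 1) := by positivity
      linarith
  have h2 : μ {x | c < g x} = 0 := by
    have hsub : {x | c < g x} ⊆ ⋃ m : ℕ, {x | g x < c + 1 / (m + 1)}ᶜ := by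
      intro x hx
      obtain ⟨m, hm⟩ := exists_nat_one_div_lt (show (0:ℝ) < g x - c by have := hx; simp only [Set.mem_setOf_eq] at this; linarith)
      refine Set.mem_iUnion.2 ⟨m, ?_⟩
      simp only [Set.mem_compl_iff, Set.mem_setOf_eq, not_lt]
      linarith
    refine measure_mono_null hsub (measure_iUnion_null fun m => ?_)
    have hone : μ {x | g x < c + 1 / (m + 1)} = 1 := by
      rcases hlev (c + 1 / (m + 1)) with h | h
      · exfalso
        have hmem : c + 1 / (m + 1) ∈ L := h
        have := le_csSup hbdd hmem
        have hpos : (0:ℝ) < 1 / (m + 1) := by positivity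
        rw [← hc] at this
        linarith
      · exact h
    rw [measure_compl (measurableSet_lt hg measurable_const) (measure_ne_top μ _), hone]
    simp
  refine ⟨c, ?_⟩
  have : μ {x | g x ≠ c} = 0 := by
    refine measure_mono_null (fun x hx => ?_) (measure_union_null h1 h2)
    rcases lt_or_gt_of_ne hx with h | h
    · exact Or.inl h
    · exact Or.inr h
  exact ae_iff.mpr (by simpa using this)


lemma key_integral
    (hprod : ∀ (I : Finset ℕ) (s : ∀ i, Set (X i)), (∀ i ∈ I, MeasurableSet (s i)) →
      μ (Set.pi ↑I s) = ∏ i ∈ I, μs i (s i))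
    {S : ∀ n, X n → X n} (hS : ∀ n, MeasurePreserving (S n) (μs n) (μs n))
    {T : (∀ n, X n) → (∀ n, X n)} (hT : MeasurePreserving T μ μ)
    (hTit : ∀ (n : ℕ) (x : ∀ n, X n) (i : ℕ), T^[n] x i = (S i)^[n] (x i))
    {h : (∀ n, X n) → ℝ} (hsm : StronglyMeasurable h) (hint : Integrable h μ)
    (N n : ℕ) {s' : Set (∀ i : Fin N, X i)} (hs' : MeasurableSet s') :
    ∫ x in res N ⁻¹' s', h (T^[n] x) ∂μ
      = ∫ x in res N ⁻¹' s',
          (∫ y, h (comb N (fun i : Fin N => (S i)^[n] (x i)) y) ∂μ) ∂μ := by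
  classical
  have hTn : MeasurePreserving T^[n] μ μ := hT.iterate n
  set Ψ : (∀ n, X n) → (∀ n, X n) := fun x i => if i < N then (S i)^[n] (x i) else x i
    with hΨdef
  have hΨ : MeasurePreserving Ψ μ μ := by
    have hR : ∀ i, MeasurePreserving (if i < N then (S i)^[n] else id) (μs i) (μs i) := by
      intro i
      by_cases hi : i < N
      · rw [if_pos hi]; exact (hS i).iterate n
      · rw [if_neg hi]; exact MeasurePreserving.id (μs i)
    have hmp := map_coordwise hprod (fun i => if i < N then (S i)^[n] else id) hR
    have hfun : (fun (x : ∀ n, X n) i => (if i < N then (S i)^[n] else id) (x i)) = Ψ := by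
      funext x i
      by_cases hi : i < N <;> simp [hΨdef, hi]
    rwa [hfun] at hmp
  have hW : MeasurePreserving (fun p : (∀ n, X n) × (∀ n, X n) => comb N (res N p.1) p.2)
      (μ.prod μ) μ := map_comb hprod N
  have hsmeas : MeasurableSet (res N ⁻¹' s') := measurable_res N hs'
  -- the two key pointwise identities
  have id2 : ∀ (x y : ∀ n, X n),
      T^[n] (comb N (res N x) y) = comb N (res N (Ψ x)) (T^[n] y) := by
    intro x y
    funext i
    rw [hTit n _ i]
    by_cases hi : i < N
    · simp [comb, res, hΨdef, hi]
    · simp [comb, res, hi, hTit n y i]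
  set F : (∀ n, X n) → ℝ := (res N ⁻¹' s').indicator (fun x => h (T^[n] x)) with hFdef
  set φ : (∀ n, X n) × (∀ n, X n) → ℝ :=
    fun p => h (comb N (res N (Ψ p.1)) (T^[n] p.2)) with hφdef
  have e1 : ∫ x in res N ⁻¹' s', h (T^[n] x) ∂μ = ∫ x, F x ∂μ :=
    (integral_indicator hsmeas).symm
  have hFaesm : AEStronglyMeasurable F μ :=
    ((hsm.comp_measurable hTn.measurable).indicator hsmeas).aestronglyMeasurable
  have e2 : ∫ x, F x ∂μ = ∫ p : (∀ n, X n) × (∀ n, X n),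
      F (comb N (res N p.1) p.2) ∂(μ.prod μ) := by
    conv_lhs => rw [← hW.map_eq]
    rw [integral_map hW.measurable.aemeasurable (by rwa [hW.map_eq])]
  have e3 : ∀ p : (∀ n, X n) × (∀ n, X n),
      F (comb N (res N p.1) p.2)
      = ((res N ⁻¹' s') ×ˢ (Set.univ : Set (∀ n, X n))).indicator φ p := by
    rintro ⟨x, y⟩
    have hmem : comb N (res N x) y ∈ res N ⁻¹' s' ↔ x ∈ res N ⁻¹' s' := by
      simp only [Set.mem_preimage, res_comb]
    by_cases hx : x ∈ res N ⁻¹' s'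
    · rw [hFdef, Set.indicator_of_mem (hmem.2 hx),
        Set.indicator_of_mem (Set.mem_prod.2 ⟨hx, Set.mem_univ y⟩)]
      simp only [hφdef]
      rw [id2 x y]
    · rw [hFdef, Set.indicator_of_notMem (fun hc => hx (hmem.1 hc)),
        Set.indicator_of_notMem (fun hc => hx (Set.mem_prod.1 hc).1)]
  have hWint : Integrable (fun p : (∀ n, X n) × (∀ n, X n) => h (comb N (res N p.1) p.2))
      (μ.prod μ) := (hW.integrable_comp hsm.aestronglyMeasurable).2 hint
  have hρ : MeasurePreserving (fun p : (∀ n, X n) × (∀ n, X n) => (Ψ p.1, T^[n] p.2))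
      (μ.prod μ) (μ.prod μ) := hΨ.prod hTn
  have hφint : Integrable φ (μ.prod μ) :=
    (hρ.integrable_comp hWint.aestronglyMeasurable).2 hWint
  have e4 : ∫ p : (∀ n, X n) × (∀ n, X n),
      ((res N ⁻¹' s') ×ˢ (Set.univ : Set (∀ n, X n))).indicator φ p ∂(μ.prod μ)
      = ∫ p in (res N ⁻¹' s') ×ˢ (Set.univ : Set (∀ n, X n)), φ p ∂(μ.prod μ) :=
    integral_indicator (hsmeas.prod MeasurableSet.univ)
  have e5 : ∫ p in (res N ⁻¹' s') ×ˢ (Set.univ : Set (∀ n, X n)), φ p ∂(μ.prod μ)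
      = ∫ x in res N ⁻¹' s', (∫ y in (Set.univ : Set (∀ n, X n)), φ (x, y) ∂μ) ∂μ :=
    setIntegral_prod φ hφint.integrableOn
  have e6 : ∀ x : ∀ n, X n, (∫ y, φ (x, y) ∂μ)
      = ∫ y, h (comb N (fun i : Fin N => (S i)^[n] (x i)) y) ∂μ := by
    intro x
    have hres : res N (Ψ x) = fun i : Fin N => (S i)^[n] (x i) := by
      funext i
      simp [res, hΨdef, i.isLt]
    have hsub : ∀ c : ∀ i : Fin N, X i,
        ∫ y, h (comb N c (T^[n] y)) ∂μ = ∫ y, h (comb N c y) ∂μ := by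
      intro c
      have haesm : AEStronglyMeasurable (fun y => h (comb N c y)) μ :=
        (hsm.comp_measurable
          ((measurable_comb N).comp (measurable_const.prodMk measurable_id))).aestronglyMeasurable
      conv_rhs => rw [← hTn.map_eq]
      rw [integral_map hTn.measurable.aemeasurable (by rwa [hTn.map_eq])]
    simp only [hφdef, hres]
    exact hsub _
  rw [e1, e2]
  calc ∫ p : (∀ n, X n) × (∀ n, X n), F (comb N (res N p.1) p.2) ∂(μ.prod μ)
      = ∫ p : (∀ n, X n) × (∀ n, X n),
          ((res N ⁻¹' s') ×ˢ (Set.univ : Set (∀ n, X n))).indicator φ p ∂(μ.prod μ) := by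
        exact integral_congr_ae (Filter.Eventually.of_forall e3)
    _ = ∫ x in res N ⁻¹' s', (∫ y in (Set.univ : Set (∀ n, X n)), φ (x, y) ∂μ) ∂μ := by
        rw [e4, e5]
    _ = ∫ x in res N ⁻¹' s',
          (∫ y, h (comb N (fun i : Fin N => (S i)^[n] (x i)) y) ∂μ) ∂μ := by
        refine setIntegral_congr_fun hsmeas fun x _ => ?_
        rw [Measure.restrict_univ]
        exact e6 x


def mSpace (X : ℕ → Type*) [∀ n, MeasurableSpace (X n)] (N : ℕ) :
    MeasurableSpace (∀ n, X n) :=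
  MeasurableSpace.comap (res N) MeasurableSpace.pi

lemma mSpace_le (N : ℕ) : mSpace X N ≤ MeasurableSpace.pi := fun s hs => by
  obtain ⟨u, hu, rfl⟩ := hs
  exact measurable_res N hu

lemma condexp_iterate_comm
    (hprod : ∀ (I : Finset ℕ) (s : ∀ i, Set (X i)), (∀ i ∈ I, MeasurableSet (s i)) →
      μ (Set.pi ↑I s) = ∏ i ∈ I, μs i (s i))
    {S : ∀ n, X n → X n} (hS : ∀ n, MeasurePreserving (S n) (μs n) (μs n))
    {T : (∀ n, X n) → (∀ n, X n)} (hT : MeasurePreserving T μ μ)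
    (hTit : ∀ (n : ℕ) (x : ∀ n, X n) (i : ℕ), T^[n] x i = (S i)^[n] (x i))
    {f₀ : (∀ n, X n) → ℝ} (hsm : StronglyMeasurable f₀) (hint : Integrable f₀ μ)
    (N n : ℕ) :
    (fun x => (μ[f₀| mSpace X N]) (T^[n] x))
      =ᵐ[μ] μ[fun x => f₀ (T^[n] x)| mSpace X N] := by
  classical
  have hleN : mSpace X N ≤ MeasurableSpace.pi := mSpace_le N
  haveI : SigmaFinite (μ.trim hleN) := by
    haveI := isFiniteMeasure_trim (μ := μ) hleN
    infer_instance
  set g : (∀ n, X n) → ℝ := μ[f₀|mSpace X N] with hgdef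
  have hgsm : StronglyMeasurable[mSpace X N] g := stronglyMeasurable_condExp
  have hgsm0 : StronglyMeasurable g := hgsm.mono hleN
  have hgint : Integrable g μ := integrable_condExp
  have hTn : MeasurePreserving T^[n] μ μ := hT.iterate n
  -- pointwise invariance of mSpace X N-measurable functions
  have hWg : ∀ (x y : ∀ n, X n), g (comb N (res N x) y) = g x := by
    intro x y
    have h1 : MeasurableSet[mSpace X N] (g ⁻¹' {g x}) := hgsm.measurable (measurableSet_singleton _)
    obtain ⟨u, hu, hpre⟩ := h1
    have hx : x ∈ g ⁻¹' {g x} := Set.mem_preimage.2 rfl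
    rw [← hpre] at hx
    have hmem : comb N (res N x) y ∈ res N ⁻¹' u := by
      simpa [Set.mem_preimage, res_comb] using hx
    rw [hpre] at hmem
    simpa using hmem
  set Ψ : (∀ n, X n) → (∀ n, X n) := fun x i => if i < N then (S i)^[n] (x i) else x i
    with hΨdef
  have hΨ : MeasurePreserving Ψ μ μ := by
    have hR : ∀ i, MeasurePreserving (if i < N then (S i)^[n] else id) (μs i) (μs i) := by
      intro i
      by_cases hi : i < N
      · rw [if_pos hi]; exact (hS i).iterate n
      · rw [if_neg hi]; exact MeasurePreserving.id (μs i)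
    have hmp := map_coordwise hprod (fun i => if i < N then (S i)^[n] else id) hR
    have hfun : (fun (x : ∀ n, X n) i => (if i < N then (S i)^[n] else id) (x i)) = Ψ := by
      funext x i
      by_cases hi : i < N <;> simp [hΨdef, hi]
    rwa [hfun] at hmp
  have hres : ∀ x : ∀ n, X n, (fun i : Fin N => (S i)^[n] (x i)) = res N (Ψ x) := by
    intro x
    funext i
    simp [res, hΨdef, i.isLt]
  have hW : MeasurePreserving (fun p : (∀ n, X n) × (∀ n, X n) => comb N (res N p.1) p.2)
      (μ.prod μ) μ := map_comb hprod N
  set G : (∀ n, X n) → ℝ := fun x => ∫ y, f₀ (comb N (res N x) y) ∂μ with hGdef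
  have hWint : Integrable (fun p : (∀ n, X n) × (∀ n, X n) => f₀ (comb N (res N p.1) p.2))
      (μ.prod μ) := (hW.integrable_comp hsm.aestronglyMeasurable).2 hint
  have hGint : Integrable G μ := hWint.integral_prod_left
  have hGsm' : AEStronglyMeasurable[mSpace X N] G μ := by
    have hG'' : StronglyMeasurable fun w : ∀ i : Fin N, X i => ∫ y, f₀ (comb N w y) ∂μ := by
      apply StronglyMeasurable.integral_prod_right
      exact hsm.comp_measurable (measurable_comb N)
    have hresm : Measurable[mSpace X N] (res (X := X) N) := fun t ht => ⟨t, ht, rfl⟩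
    exact (hG''.comp_measurable hresm).aestronglyMeasurable
  have hGf : G =ᵐ[μ] g := by
    refine ae_eq_condExp_of_forall_setIntegral_eq hleN hint
      (fun s _ _ => hGint.integrableOn) ?_ hGsm'
    rintro s ⟨u, hu, rfl⟩ -
    have hk := key_integral hprod hS hT hTit hsm hint N 0 hu
    simp only [Function.iterate_zero, id_eq] at hk
    exact (by exact hk.symm :
      ∫ x in res N ⁻¹' u, G x ∂μ = ∫ x in res N ⁻¹' u, f₀ x ∂μ)
  -- now the commutation via uniqueness of conditional expectation
  have hintc : Integrable (fun x => f₀ (T^[n] x)) μ :=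
    (hTn.integrable_comp hsm.aestronglyMeasurable).2 hint
  have hgTint : Integrable (fun x => g (T^[n] x)) μ :=
    (hTn.integrable_comp hgsm0.aestronglyMeasurable).2 hgint
  have hTm : Measurable[mSpace X N, mSpace X N] T^[n] := by
    rintro t ⟨u, hu, rfl⟩
    refine ⟨(fun w : ∀ i : Fin N, X i => fun i : Fin N => (S i)^[n] (w i)) ⁻¹' u, ?_, ?_⟩
    · have hmble : Measurable (fun w : ∀ i : Fin N, X i => fun i : Fin N => (S i)^[n] (w i)) :=
        measurable_pi_iff.2 fun i => ((hS i).iterate n).measurable.comp (measurable_pi_apply i)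
      exact hmble hu
    · ext x
      have hx : res N (T^[n] x)
          = (fun w : ∀ i : Fin N, X i => fun i : Fin N => (S i)^[n] (w i)) (res N x) := by
        funext i
        exact hTit n x i
      simp only [Set.mem_preimage]
      rw [hx]
  refine ae_eq_condExp_of_forall_setIntegral_eq hleN hintc
    (fun s _ _ => hgTint.integrableOn) ?_
    ((hgsm.comp_measurable hTm).aestronglyMeasurable)
  rintro s ⟨u, hu, rfl⟩ -
  have hkf := key_integral hprod hS hT hTit hsm hint N n hu
  have hkg := key_integral hprod hS hT hTit hgsm0 hgint N n hu
  rw [hkg, hkf]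
  have hgside : ∀ x : ∀ n, X n,
      (∫ y, g (comb N (fun i : Fin N => (S i)^[n] (x i)) y) ∂μ) = g (Ψ x) := by
    intro x
    rw [hres x]
    have : ∀ y : ∀ n, X n, g (comb N (res N (Ψ x)) y) = g (Ψ x) := fun y => hWg (Ψ x) y
    rw [integral_congr_ae (Filter.Eventually.of_forall this)]
    simp [measure_univ]
  have hfside : ∀ x : ∀ n, X n,
      (∫ y, f₀ (comb N (fun i : Fin N => (S i)^[n] (x i)) y) ∂μ) = G (Ψ x) := by
    intro x
    rw [hres x]
  calc ∫ x in res N ⁻¹' u, (∫ y, g (comb N (fun i : Fin N => (S i)^[n] (x i)) y) ∂μ) ∂μ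
      = ∫ x in res N ⁻¹' u, g (Ψ x) ∂μ := by
        refine setIntegral_congr_fun (measurable_res N hu) fun x _ => hgside x
    _ = ∫ x in res N ⁻¹' u, G (Ψ x) ∂μ := by
        have hae : (fun x => G (Ψ x)) =ᵐ[μ] fun x => g (Ψ x) := by
          have := MeasureTheory.ae_eq_comp (f := Ψ) hΨ.measurable.aemeasurable
            (g := G) (g' := g) (by rwa [hΨ.map_eq])
          exact this
        exact (integral_congr_ae (ae_restrict_of_ae hae)).symm
    _ = ∫ x in res N ⁻¹' u, (∫ y, f₀ (comb N (fun i : Fin N => (S i)^[n] (x i)) y) ∂μ) ∂μ := by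
        refine setIntegral_congr_fun (measurable_res N hu) fun x _ => (hfside x).symm


lemma condexp_eq_integral
    (hprod : ∀ (I : Finset ℕ) (s : ∀ i, Set (X i)), (∀ i ∈ I, MeasurableSet (s i)) →
      μ (Set.pi ↑I s) = ∏ i ∈ I, μs i (s i))
    {S : ∀ n, X n → X n} (hS : ∀ n, MeasurePreserving (S n) (μs n) (μs n))
    {T : (∀ n, X n) → (∀ n, X n)} (hT : MeasurePreserving T μ μ)
    (hTit : ∀ (n : ℕ) (x : ∀ n, X n) (i : ℕ), T^[n] x i = (S i)^[n] (x i))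
    {f₀ : (∀ n, X n) → ℝ} (hsm : StronglyMeasurable f₀) (hint : Integrable f₀ μ)
    {nk : ℕ → ℕ} (hnk : Tendsto nk atTop atTop)
    (hrigid0 : Tendsto (fun k => eLpNorm (fun x => f₀ (T^[nk k] x) - f₀ x) 1 μ)
      atTop (𝓝 0))
    (N : ℕ)
    (hpmN : ∃ α : ℝ, 0 < α ∧
      ∀ A B : Set (∀ n, X n), MeasurableSet A → MeasurableSet B →
        (∀ x y : ∀ n, X n, (∀ i < N, x i = y i) → (x ∈ A ↔ y ∈ A)) →
        (∀ x y : ∀ n, X n, (∀ i < N, x i = y i) → (x ∈ B ↔ y ∈ B)) →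
        α * (μ A).toReal * (μ B).toReal ≤
          atTop.liminf (fun n : ℕ => (μ (A ∩ T^[n] ⁻¹' B)).toReal)) :
    μ[f₀| mSpace X N] =ᵐ[μ] fun _ => ∫ x, f₀ x ∂μ := by
  classical
  have hleN : mSpace X N ≤ MeasurableSpace.pi := mSpace_le N
  haveI : SigmaFinite (μ.trim hleN) := by
    haveI := isFiniteMeasure_trim (μ := μ) hleN
    infer_instance
  set g : (∀ n, X n) → ℝ := μ[f₀| mSpace X N] with hgdef
  have hgsm : StronglyMeasurable[mSpace X N] g := stronglyMeasurable_condExp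
  have hgsm0 : StronglyMeasurable g := hgsm.mono hleN
  have hgint : Integrable g μ := integrable_condExp
  -- L¹ rigidity of g
  have hgk : Tendsto (fun k => eLpNorm (fun x => g (T^[nk k] x) - g x) 1 μ) atTop (𝓝 0) := by
    have hb : ∀ k, eLpNorm (fun x => g (T^[nk k] x) - g x) 1 μ
        ≤ eLpNorm (fun x => f₀ (T^[nk k] x) - f₀ x) 1 μ := by
      intro k
      have hintc : Integrable (fun x => f₀ (T^[nk k] x)) μ :=
        ((hT.iterate (nk k)).integrable_comp hsm.aestronglyMeasurable).2 hint
      have h1 : (fun x => g (T^[nk k] x) - g x) =ᵐ[μ]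
          μ[(fun x => f₀ (T^[nk k] x)) - f₀| mSpace X N] := by
        filter_upwards [condexp_iterate_comm hprod hS hT hTit hsm hint N (nk k),
          condExp_sub (m := mSpace X N) hintc hint] with x hx1 hx2
        rw [hx2, Pi.sub_apply, ← hx1]
      calc eLpNorm (fun x => g (T^[nk k] x) - g x) 1 μ
          = eLpNorm (μ[(fun x => f₀ (T^[nk k] x)) - f₀| mSpace X N]) 1 μ :=
            eLpNorm_congr_ae h1
        _ ≤ eLpNorm ((fun x => f₀ (T^[nk k] x)) - f₀) 1 μ :=
            eLpNorm_one_condExp_le_eLpNorm _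
        _ = eLpNorm (fun x => f₀ (T^[nk k] x) - f₀ x) 1 μ := rfl
    exact tendsto_of_tendsto_of_tendsto_of_le_of_le tendsto_const_nhds hrigid0
      (fun k => zero_le) hb
  have htim : TendstoInMeasure μ (fun k x => g (T^[nk k] x)) atTop g :=
    tendstoInMeasure_of_tendsto_eLpNorm (p := 1) one_ne_zero
      (fun k => (hgsm0.comp_measurable (hT.iterate (nk k)).measurable).aestronglyMeasurable)
      hgsm0.aestronglyMeasurable hgk
  -- all level sets are trivial
  have hlevel : ∀ a : ℝ, μ {x | g x < a} = 0 ∨ μ {x | g x < a} = 1 := by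
    intro a
    obtain ⟨α, hα, hPM⟩ := hpmN
    have hAm' : MeasurableSet[mSpace X N] {x | g x < a} :=
      hgsm.measurable measurableSet_Iio
    have hAm : MeasurableSet {x | g x < a} := hleN _ hAm'
    obtain ⟨u, hu, hApre⟩ := hAm'
    have hdep : ∀ x y : ∀ n, X n, (∀ i < N, x i = y i) →
        (x ∈ {x | g x < a} ↔ y ∈ {x | g x < a}) := by
      intro x y hxy
      have hresxy : res N x = res N y := funext fun i => hxy i i.isLt
      rw [← hApre]
      simp only [Set.mem_preimage]
      rw [hresxy]
    have hmain := hPM {x | g x < a} {x | g x < a}ᶜ hAm hAm.compl hdep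
      (fun x y hxy => not_congr (hdep x y hxy))
    set A := {x | g x < a} with hAdef
    set B : ℕ → Set (∀ n, X n) := fun m => {x | a - 1/(m+1 : ℝ) ≤ g x ∧ g x < a} with hBdef
    have hmeasB : ∀ m : ℕ, MeasurableSet (B m) := fun m =>
      (measurableSet_le measurable_const hgsm0.measurable).inter
        (measurableSet_lt hgsm0.measurable measurable_const)
    have hBtend : Tendsto (fun m : ℕ => (μ (B m)).toReal) atTop (𝓝 0) := by
      have hanti : Antitone B := by
        intro m1 m2 hm x hx
        have hcast : (m1:ℝ) ≤ m2 := Nat.cast_le.2 hm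
        have h12 : (1 : ℝ)/(m2+1) ≤ 1/(m1+1) := by
          apply one_div_le_one_div_of_le
          · positivity
          · linarith
        simp only [hBdef, Set.mem_setOf_eq] at hx ⊢
        exact ⟨by linarith [hx.1], hx.2⟩
      have hiInter : (⋂ m : ℕ, B m) = ∅ := by
        ext x
        simp only [Set.mem_iInter, hBdef, Set.mem_setOf_eq, Set.mem_empty_iff_false, iff_false,
          not_forall]
        by_contra hcon
        push_neg at hcon
        have h0 := hcon 0
        obtain ⟨m, hm⟩ := exists_nat_one_div_lt (show (0:ℝ) < a - g x by linarith [h0.2])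
        have := (hcon m).1
        linarith
      have htd := tendsto_measure_iInter_atTop (μ := μ)
        (fun m => (hmeasB m).nullMeasurableSet) hanti ⟨0, measure_ne_top μ _⟩
      rw [hiInter, measure_empty] at htd
      have := (ENNReal.tendsto_toReal ENNReal.zero_ne_top).comp htd
      simpa [Function.comp_def] using this
    have hliminf_le : ∀ m : ℕ,
        atTop.liminf (fun n : ℕ => (μ (A ∩ T^[n] ⁻¹' Aᶜ)).toReal) ≤ (μ (B m)).toReal := by
      intro m
      refine le_of_forall_pos_le_add fun δ hδ => ?_
      have hsmall : Tendsto
          (fun k => (μ {x | 1/(m+1 : ℝ) ≤ dist (g (T^[nk k] x)) (g x)}).toReal) atTop (𝓝 0) := by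
        have := tendstoInMeasure_iff_dist.1 htim (1/(m+1 : ℝ)) (by positivity)
        have h2 := (ENNReal.tendsto_toReal ENNReal.zero_ne_top).comp this
        simpa [Function.comp_def] using h2
      have hev : ∀ᶠ k in atTop, (μ (A ∩ T^[nk k] ⁻¹' Aᶜ)).toReal ≤ (μ (B m)).toReal + δ := by
        filter_upwards [hsmall.eventually_lt_const hδ] with k hk
        have hsub : A ∩ T^[nk k] ⁻¹' Aᶜ ⊆
            {x | 1/(m+1:ℝ) ≤ dist (g (T^[nk k] x)) (g x)} ∪ B m := by
          rintro x ⟨hx1, hx2⟩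
          have hgx : g x < a := hx1
          have hgTx : a ≤ g (T^[nk k] x) := not_lt.1 hx2
          by_cases hcase : a - 1/(m+1:ℝ) ≤ g x
          · exact Or.inr ⟨hcase, hgx⟩
          · left
            push_neg at hcase
            show 1/(m+1:ℝ) ≤ dist (g (T^[nk k] x)) (g x)
            rw [Real.dist_eq]
            have h3 : 1/(m+1:ℝ) ≤ g (T^[nk k] x) - g x := by linarith
            exact h3.trans (le_abs_self _)
        calc (μ (A ∩ T^[nk k] ⁻¹' Aᶜ)).toReal
            ≤ (μ ({x | 1/(m+1:ℝ) ≤ dist (g (T^[nk k] x)) (g x)} ∪ B m)).toReal :=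
              ENNReal.toReal_mono (measure_ne_top μ _) (measure_mono hsub)
          _ ≤ (μ {x | 1/(m+1:ℝ) ≤ dist (g (T^[nk k] x)) (g x)}).toReal + (μ (B m)).toReal := by
              rw [← ENNReal.toReal_add (measure_ne_top μ _) (measure_ne_top μ _)]
              exact ENNReal.toReal_mono
                (by exact ENNReal.add_ne_top.2 ⟨measure_ne_top μ _, measure_ne_top μ _⟩)
                (measure_union_le _ _)
          _ ≤ (μ (B m)).toReal + δ := by linarith
      have hfreq : ∃ᶠ n in atTop,
          (μ (A ∩ T^[n] ⁻¹' Aᶜ)).toReal ≤ (μ (B m)).toReal + δ :=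
        hnk.frequently hev.frequently
      exact liminf_le_of_frequently_le hfreq
        (isBoundedUnder_of ⟨0, fun n => ENNReal.toReal_nonneg⟩)
    have hle0 : α * (μ A).toReal * (μ Aᶜ).toReal ≤ 0 :=
      ge_of_tendsto hBtend
        (Filter.Eventually.of_forall fun m => le_trans hmain (hliminf_le m))
    have h1 : 0 ≤ (μ A).toReal := ENNReal.toReal_nonneg
    have h2 : 0 ≤ (μ Aᶜ).toReal := ENNReal.toReal_nonneg
    have hz : (μ A).toReal = 0 ∨ (μ Aᶜ).toReal = 0 := by
      have hprod0 : (μ A).toReal * (μ Aᶜ).toReal = 0 :=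
        le_antisymm (by nlinarith) (mul_nonneg h1 h2)
      exact mul_eq_zero.1 hprod0
    rcases hz with h | h
    · left
      rcases (ENNReal.toReal_eq_zero_iff _).1 h with h' | h'
      · exact h'
      · exact absurd h' (measure_ne_top μ _)
    · right
      have hc0 : μ Aᶜ = 0 := by
        rcases (ENNReal.toReal_eq_zero_iff _).1 h with h' | h'
        · exact h'
        · exact absurd h' (measure_ne_top μ _)
      exact (prob_compl_eq_zero_iff hAm).1 hc0
  obtain ⟨c, hc⟩ := eq_const_of_levels hgsm0.measurable hlevel
  have hcint : ∫ x, g x ∂μ = c := by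
    rw [integral_congr_ae hc]
    simp [measure_univ]
  have hfg : ∫ x, g x ∂μ = ∫ x, f₀ x ∂μ := integral_condExp hleN
  have hceq : c = ∫ x, f₀ x ∂μ := by rw [← hcint, hfg]
  rw [← hceq]
  exact hc


lemma mSpace_mono {N M : ℕ} (hNM : N ≤ M) : mSpace X N ≤ mSpace X M := by
  intro t ht
  obtain ⟨u, hu, rfl⟩ := ht
  refine ⟨(fun w : ∀ i : Fin M, X i => fun i : Fin N => w (Fin.castLE hNM i)) ⁻¹' u, ?_, ?_⟩
  · have hmble : Measurable (fun w : ∀ i : Fin M, X i => fun i : Fin N => w (Fin.castLE hNM i)) :=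
      measurable_pi_iff.2 fun i => measurable_pi_apply _
    exact hmble hu
  · rfl

lemma iSup_mSpace : (⨆ N, mSpace X N) = (MeasurableSpace.pi : MeasurableSpace (∀ n, X n)) := by
  classical
  refine le_antisymm (iSup_le fun N => mSpace_le N) ?_
  rw [← generateFrom_boxes]
  rw [MeasurableSpace.generateFrom_le_iff]
  rintro B ⟨I, s, hs, rfl⟩
  set M := (I.sup id) + 1 with hMdef
  have hiM : ∀ i ∈ I, i < M := fun i hi => Nat.lt_succ_of_le (Finset.le_sup (f := id) hi)
  have hmem : MeasurableSet[mSpace X M] (Set.pi ↑I s) := by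
    refine ⟨Set.pi Set.univ (fun j : Fin M => if (j : ℕ) ∈ I then s j else Set.univ), ?_, ?_⟩
    · refine MeasurableSet.univ_pi fun j => ?_
      split
      · next hj => exact hs _ hj
      · exact MeasurableSet.univ
    · ext x
      simp only [Set.mem_preimage, Set.mem_univ_pi, Set.mem_pi, Finset.mem_coe]
      constructor
      · intro hx i hi
        have := hx ⟨i, hiM i hi⟩
        simpa [res, hi] using this
      · intro hx j
        by_cases hj : (j : ℕ) ∈ I
        · simpa [res, hj] using hx j hj
        · simp [res, hj]
  exact (le_iSup (fun N => mSpace X N) M) _ hmem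

theorem infinite_product_mildlyMixing
    {X : ℕ → Type*} [∀ n, MeasurableSpace (X n)]
    (μs : ∀ n, Measure (X n)) [∀ n, IsProbabilityMeasure (μs n)]
    (μ : Measure (∀ n, X n)) [IsProbabilityMeasure μ]
    (hprod : ∀ (I : Finset ℕ) (s : ∀ i, Set (X i)), (∀ i ∈ I, MeasurableSet (s i)) →
      μ (Set.pi ↑I s) = ∏ i ∈ I, μs i (s i))
    (S : ∀ n, X n → X n) (hS : ∀ n, MeasurePreserving (S n) (μs n) (μs n))
    (T : (∀ n, X n) → (∀ n, X n)) (hTdef : T = fun x n => S n (x n))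
    (hT : MeasurePreserving T μ μ)
    (hpm : ∀ N : ℕ, ∃ α : ℝ, 0 < α ∧
      ∀ A B : Set (∀ n, X n), MeasurableSet A → MeasurableSet B →
        (∀ x y : ∀ n, X n, (∀ i < N, x i = y i) → (x ∈ A ↔ y ∈ A)) →
        (∀ x y : ∀ n, X n, (∀ i < N, x i = y i) → (x ∈ B ↔ y ∈ B)) →
        α * (μ A).toReal * (μ B).toReal ≤
          atTop.liminf (fun n : ℕ => (μ (A ∩ T^[n] ⁻¹' B)).toReal))
    (f : (∀ n, X n) → ℝ) (hf : MemLp f 2 μ)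
    (nk : ℕ → ℕ) (hnk : Tendsto nk atTop atTop)
    (hrigid : Tendsto (fun k => eLpNorm (fun x => f (T^[nk k] x) - f x) 2 μ)
      atTop (𝓝 0)) :
    ∃ c : ℝ, f =ᵐ[μ] fun _ => c := by
  classical
  obtain ⟨f₀, hf₀sm, hff₀⟩ : ∃ f₀, StronglyMeasurable f₀ ∧ f =ᵐ[μ] f₀ :=
    ⟨hf.1.mk f, hf.1.stronglyMeasurable_mk, hf.1.ae_eq_mk⟩
  have hint : Integrable f₀ μ := (hf.ae_eq hff₀).integrable one_le_two
  have hTit : ∀ (n : ℕ) (x : ∀ n, X n) (i : ℕ), T^[n] x i = (S i)^[n] (x i) := by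
    intro n
    induction n with
    | zero => intro x i; simp
    | succ n ih =>
      intro x i
      rw [Function.iterate_succ_apply, ih (T x) i, hTdef]
      rw [Function.iterate_succ_apply]
  -- rigidity in L¹ for f₀
  have hrig1 : Tendsto (fun k => eLpNorm (fun x => f₀ (T^[nk k] x) - f₀ x) 1 μ)
      atTop (𝓝 0) := by
    have hb : ∀ k, eLpNorm (fun x => f₀ (T^[nk k] x) - f₀ x) 1 μ
        ≤ eLpNorm (fun x => f (T^[nk k] x) - f x) 2 μ := by
      intro k
      have h1 : (fun x => f (T^[nk k] x)) =ᵐ[μ] (fun x => f₀ (T^[nk k] x)) :=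
        MeasureTheory.ae_eq_comp (hT.iterate (nk k)).measurable.aemeasurable
          (by rwa [(hT.iterate (nk k)).map_eq])
      have hae : (fun x => f₀ (T^[nk k] x) - f₀ x) =ᵐ[μ] (fun x => f (T^[nk k] x) - f x) := by
        filter_upwards [h1, hff₀] with x h1x h2x
        rw [h1x, h2x]
      have haesm : AEStronglyMeasurable (fun x => f₀ (T^[nk k] x) - f₀ x) μ :=
        ((hf₀sm.comp_measurable (hT.iterate (nk k)).measurable).sub hf₀sm).aestronglyMeasurable
      calc eLpNorm (fun x => f₀ (T^[nk k] x) - f₀ x) 1 μ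
          ≤ eLpNorm (fun x => f₀ (T^[nk k] x) - f₀ x) 2 μ :=
            eLpNorm_le_eLpNorm_of_exponent_le one_le_two haesm
        _ = eLpNorm (fun x => f (T^[nk k] x) - f x) 2 μ := eLpNorm_congr_ae hae
    exact tendsto_of_tendsto_of_tendsto_of_le_of_le tendsto_const_nhds hrigid
      (fun k => zero_le) hb
  -- the conditional expectations are a.e. constant
  set c : ℝ := ∫ x, f₀ x ∂μ with hcdef
  have hconst : ∀ N : ℕ, μ[f₀| mSpace X N] =ᵐ[μ] fun _ => c := fun N =>
    condexp_eq_integral hprod hS hT hTit hf₀sm hint hnk hrig1 N (hpm N)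
  -- the filtration and Lévy's upward theorem
  let ℱ : Filtration ℕ (MeasurableSpace.pi : MeasurableSpace (∀ n, X n)) :=
    { seq := fun N => mSpace X N
      mono' := fun _ _ h => mSpace_mono h
      le' := fun N => mSpace_le N }
  have hsupℱ : (⨆ n, ℱ n) = (MeasurableSpace.pi : MeasurableSpace (∀ n, X n)) := iSup_mSpace
  have hlevy := hint.tendsto_eLpNorm_condExp (ℱ := ℱ) (hsupℱ.symm ▸ hf₀sm)
  have heq : ∀ N : ℕ, eLpNorm (μ[f₀|ℱ N] - f₀) 1 μ = eLpNorm ((fun _ => c) - f₀) 1 μ := by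
    intro N
    refine eLpNorm_congr_ae ?_
    filter_upwards [hconst N] with x hx
    simp only [Pi.sub_apply]
    rw [show (μ[f₀|ℱ N]) x = (μ[f₀|mSpace X N]) x from rfl, hx]
  have hzero : eLpNorm ((fun _ => c) - f₀) 1 μ = 0 := by
    have hcseq : (fun N => eLpNorm (μ[f₀|ℱ N] - f₀) 1 μ)
        = fun _ => eLpNorm ((fun _ => c) - f₀) 1 μ := funext heq
    rw [hcseq] at hlevy
    exact tendsto_nhds_unique tendsto_const_nhds hlevy
  have hae0 : ((fun _ => c) - f₀ : (∀ n, X n) → ℝ) =ᵐ[μ] 0 :=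
    (eLpNorm_eq_zero_iff (aestronglyMeasurable_const.sub hf₀sm.aestronglyMeasurable)
      one_ne_zero).1 hzero
  refine ⟨c, ?_⟩
  filter_upwards [hff₀, hae0] with x h1 h2
  have h3 : c - f₀ x = 0 := h2
  rw [h1]
  linarith


end InfProdMix

open InfProdMix in
/-- Let `T = ⊗ S_i` be an infinite direct product of measure-preserving
transformations on an infinite product probability space, such that every finite
subproduct is partially mixing (with some positive constant); here partial mixing of
the `N`-th subproduct is expressed on sets depending only on the first `N` coordinates.
Then `T` is mildly mixing: every rigid function is constant a.e. -/
theorem infinite_product_mildlyMixing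
    {X : ℕ → Type*} [∀ n, MeasurableSpace (X n)]
    (μs : ∀ n, Measure (X n)) [∀ n, IsProbabilityMeasure (μs n)]
    (μ : Measure (∀ n, X n)) [IsProbabilityMeasure μ]
    (hprod : ∀ (I : Finset ℕ) (s : ∀ i, Set (X i)), (∀ i ∈ I, MeasurableSet (s i)) →
      μ (Set.pi ↑I s) = ∏ i ∈ I, μs i (s i))
    (S : ∀ n, X n → X n) (hS : ∀ n, MeasurePreserving (S n) (μs n) (μs n))
    (T : (∀ n, X n) → (∀ n, X n)) (hTdef : T = fun x n => S n (x n))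
    (hT : MeasurePreserving T μ μ)
    (hpm : ∀ N : ℕ, ∃ α : ℝ, 0 < α ∧
      ∀ A B : Set (∀ n, X n), MeasurableSet A → MeasurableSet B →
        (∀ x y : ∀ n, X n, (∀ i < N, x i = y i) → (x ∈ A ↔ y ∈ A)) →
        (∀ x y : ∀ n, X n, (∀ i < N, x i = y i) → (x ∈ B ↔ y ∈ B)) →
        α * (μ A).toReal * (μ B).toReal ≤
          atTop.liminf (fun n : ℕ => (μ (A ∩ T^[n] ⁻¹' B)).toReal))
    (f : (∀ n, X n) → ℝ) (hf : MemLp f 2 μ)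
    (nk : ℕ → ℕ) (hnk : Tendsto nk atTop atTop)
    (hrigid : Tendsto (fun k => eLpNorm (fun x => f (T^[nk k] x) - f x) 2 μ)
      atTop (𝓝 0)) :
    ∃ c : ℝ, f =ᵐ[μ] fun _ => c := by
  classical
  obtain ⟨f₀, hf₀sm, hff₀⟩ : ∃ f₀, StronglyMeasurable f₀ ∧ f =ᵐ[μ] f₀ :=
    ⟨hf.1.mk f, hf.1.stronglyMeasurable_mk, hf.1.ae_eq_mk⟩
  have hint : Integrable f₀ μ := (hf.ae_eq hff₀).integrable one_le_two
  have hTit : ∀ (n : ℕ) (x : ∀ n, X n) (i : ℕ), T^[n] x i = (S i)^[n] (x i) := by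
    intro n
    induction n with
    | zero => intro x i; simp
    | succ n ih =>
      intro x i
      rw [Function.iterate_succ_apply, ih (T x) i, hTdef]
      rw [Function.iterate_succ_apply]
  -- rigidity in L¹ for f₀
  have hrig1 : Tendsto (fun k => eLpNorm (fun x => f₀ (T^[nk k] x) - f₀ x) 1 μ)
      atTop (𝓝 0) := by
    have hb : ∀ k, eLpNorm (fun x => f₀ (T^[nk k] x) - f₀ x) 1 μ
        ≤ eLpNorm (fun x => f (T^[nk k] x) - f x) 2 μ := by
      intro k
      have h1 : (fun x => f (T^[nk k] x)) =ᵐ[μ] (fun x => f₀ (T^[nk k] x)) :=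
        MeasureTheory.ae_eq_comp (hT.iterate (nk k)).measurable.aemeasurable
          (by rwa [(hT.iterate (nk k)).map_eq])
      have hae : (fun x => f₀ (T^[nk k] x) - f₀ x) =ᵐ[μ] (fun x => f (T^[nk k] x) - f x) := by
        filter_upwards [h1, hff₀] with x h1x h2x
        rw [h1x, h2x]
      have haesm : AEStronglyMeasurable (fun x => f₀ (T^[nk k] x) - f₀ x) μ :=
        ((hf₀sm.comp_measurable (hT.iterate (nk k)).measurable).sub hf₀sm).aestronglyMeasurable
      calc eLpNorm (fun x => f₀ (T^[nk k] x) - f₀ x) 1 μ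
          ≤ eLpNorm (fun x => f₀ (T^[nk k] x) - f₀ x) 2 μ :=
            eLpNorm_le_eLpNorm_of_exponent_le one_le_two haesm
        _ = eLpNorm (fun x => f (T^[nk k] x) - f x) 2 μ := eLpNorm_congr_ae hae
    exact tendsto_of_tendsto_of_tendsto_of_le_of_le tendsto_const_nhds hrigid
      (fun k => zero_le) hb
  -- the conditional expectations are a.e. constant
  set c : ℝ := ∫ x, f₀ x ∂μ with hcdef
  have hconst : ∀ N : ℕ, μ[f₀| mSpace X N] =ᵐ[μ] fun _ => c := fun N =>
    condexp_eq_integral hprod hS hT hTit hf₀sm hint hnk hrig1 N (hpm N)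
  -- the filtration and Lévy's upward theorem
  let ℱ : Filtration ℕ (MeasurableSpace.pi : MeasurableSpace (∀ n, X n)) :=
    { seq := fun N => mSpace X N
      mono' := fun _ _ h => mSpace_mono h
      le' := fun N => mSpace_le N }
  have hsupℱ : (⨆ n, ℱ n) = (MeasurableSpace.pi : MeasurableSpace (∀ n, X n)) := iSup_mSpace
  have hlevy := hint.tendsto_eLpNorm_condExp (ℱ := ℱ) (hsupℱ.symm ▸ hf₀sm)
  have heq : ∀ N : ℕ, eLpNorm (μ[f₀|ℱ N] - f₀) 1 μ = eLpNorm ((fun _ => c) - f₀) 1 μ := by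
    intro N
    refine eLpNorm_congr_ae ?_
    filter_upwards [hconst N] with x hx
    simp only [Pi.sub_apply]
    rw [show (μ[f₀|ℱ N]) x = (μ[f₀|mSpace X N]) x from rfl, hx]
  have hzero : eLpNorm ((fun _ => c) - f₀) 1 μ = 0 := by
    have hcseq : (fun N => eLpNorm (μ[f₀|ℱ N] - f₀) 1 μ)
        = fun _ => eLpNorm ((fun _ => c) - f₀) 1 μ := funext heq
    rw [hcseq] at hlevy
    exact tendsto_nhds_unique tendsto_const_nhds hlevy
  have hae0 : ((fun _ => c) - f₀ : (∀ n, X n) → ℝ) =ᵐ[μ] 0 :=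
    (eLpNorm_eq_zero_iff (aestronglyMeasurable_const.sub hf₀sm.aestronglyMeasurable)
      one_ne_zero).1 hzero
  refine ⟨c, ?_⟩
  filter_upwards [hff₀, hae0] with x h1 h2
  have h3 : c - f₀ x = 0 := h2
  rw [h1]
  linarith
end
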